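/- arXiv:1904.11877 — 6 statements merged into one kernel-verified Lean document; each statement's English description precedes it below -/
import Mathlib

section
/- For all real x ≥ 0 and all real p ≥ 0, the function y_p(x) = (p+1)x − p − x^{p+1} satisfies y_p(x) ≤ −p(1−√x)². -/
/-! With `t = √x`, Bernoulli's inequality gives `t ^ (p + 1) ≥ (p + 1) t - p`; squaring it
(when the right side is nonnegative) leaves exactly the slack `p² (1 - t)²`, and when
`(p + 1) t < p` the bound `-p (1 - t)²` already dominates `(p + 1) t² - p`. -/

lemma mul_sub_sub_one_le_rpow {t q : ℝ} (ht : 0 ≤ t) (hq : 1 ≤ q) :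
    q * t - (q - 1) ≤ t ^ q := by
  have bernoulli := one_add_mul_self_le_rpow_one_add (s := t - 1) (by linarith) hq
  calc q * t - (q - 1) = 1 + q * (t - 1) := by ring
    _ ≤ (1 + (t - 1)) ^ q := bernoulli
    _ = t ^ q := by rw [add_sub_cancel]

lemma add_one_mul_sq_sub_sub_sq_le {t a p : ℝ} (ht : 0 ≤ t) (hp : 0 ≤ p)
    (h : (p + 1) * t - p ≤ a) : (p + 1) * t ^ 2 - p - a ^ 2 ≤ -p * (1 - t) ^ 2 := by
  rcases le_or_gt 0 ((p + 1) * t - p) with hpos | hneg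
  · have hsq : ((p + 1) * t - p) ^ 2 ≤ a ^ 2 := pow_le_pow_left₀ hpos h 2
    nlinarith [sq_nonneg (p * (1 - t))]
  · nlinarith [sq_nonneg a, mul_nonneg ht hp]

theorem young_refined (x p : ℝ) (hx : 0 ≤ x) (hp : 0 ≤ p) :
    (p + 1) * x - p - x ^ (p + 1) ≤ -p * (1 - Real.sqrt x) ^ 2 := by
  have hsqrt : 0 ≤ Real.sqrt x := Real.sqrt_nonneg x
  have hsq : (Real.sqrt x ^ (p + 1)) ^ 2 = x ^ (p + 1) := by
    rw [sq, ← Real.mul_rpow hsqrt hsqrt, Real.mul_self_sqrt hx]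
  have hbernoulli : (p + 1) * Real.sqrt x - p ≤ Real.sqrt x ^ (p + 1) := by
    simpa using mul_sub_sub_one_le_rpow hsqrt (by linarith : 1 ≤ p + 1)
  simpa [Real.sq_sqrt hx, hsq] using add_one_mul_sq_sub_sub_sq_le hsqrt hp hbernoulli
end

section
/- Let n be a positive integer and suppose r ∈ (0, π/2) satisfies sin r · cosh(π(n + 1/2) + (−1)^{n+1} r) = 1. Then r ≤ π e^{−π n}. -/
/-!
By Jordan's inequality `sin r ≥ (2/π) r`, and since `|(−1)^{n+1} r| < π/2` forces the argument of
`cosh` to be at least `π n`, the equation gives `1 ≥ (2/π) r · cosh(π n) ≥ (2/π) r · e^{π n}/2`.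
-/

open Real

theorem Real.exp_div_two_le_cosh (x : ℝ) : exp x / 2 ≤ cosh x := by
  rw [cosh_eq]
  linarith [exp_pos (-x)]

theorem Real.exp_div_two_le_cosh_of_le {a x : ℝ} (ha : 0 ≤ a) (hax : a ≤ x) :
    exp a / 2 ≤ cosh x :=
  (exp_div_two_le_cosh a).trans <|
    cosh_strictMonoOn.monotoneOn ha (Set.mem_Ici.2 (ha.trans hax)) hax

theorem Real.mul_le_pi_div_two_of_sin_mul_le_one {r c : ℝ} (hr : 0 ≤ r) (hr' : r ≤ π / 2)
    (hc : 0 ≤ c) (h : sin r * c ≤ 1) : r * c ≤ π / 2 := by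
  have hsin : 2 / π * r * c ≤ sin r * c := mul_le_mul_of_nonneg_right (mul_le_sin hr hr') hc
  have hπ : 0 < π := pi_pos
  calc r * c = π / 2 * (2 / π * r * c) := by field_simp
    _ ≤ π / 2 * 1 := by gcongr; linarith
    _ = π / 2 := mul_one _

theorem root_correction_bound_general (n : ℕ) (r : ℝ)
    (hr : r ∈ Set.Ioo 0 (π / 2))
    (heq : Real.sin r * Real.cosh (π * (n + 1/2) + (-1 : ℝ) ^ (n + 1) * r) = 1) :
    r ≤ π * Real.exp (-π * n) := by
  obtain ⟨hr0, hr2⟩ := hr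
  have hx : π * n ≤ π * (n + 1/2) + (-1 : ℝ) ^ (n + 1) * r := by
    have hsigned : |(-1 : ℝ) ^ (n + 1) * r| = r := by simp [abs_of_pos hr0]
    linarith [neg_abs_le ((-1 : ℝ) ^ (n + 1) * r)]
  set x := π * (n + 1/2) + (-1 : ℝ) ^ (n + 1) * r
  have hcosh : exp (π * n) / 2 ≤ cosh x := exp_div_two_le_cosh_of_le (by positivity) hx
  have hrx : r * cosh x ≤ π / 2 :=
    mul_le_pi_div_two_of_sin_mul_le_one hr0.le hr2.le (cosh_pos x).le heq.le
  have hr_exp : r * (exp (π * n) / 2) ≤ r * cosh x := mul_le_mul_of_nonneg_left hcosh hr0.le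
  rw [neg_mul, exp_neg, ← div_eq_mul_inv, le_div_iff₀ (exp_pos _)]
  linarith

/-- If `r ∈ (0, π/2)` satisfies `sin r · cosh(π(n + 1/2) + (−1)^{n+1} r) = 1`, then
`r ≤ π e^{−π n}`. -/
theorem root_correction_bound (n : ℕ) (hn : 1 ≤ n) (r : ℝ)
    (hr : r ∈ Set.Ioo 0 (π / 2))
    (heq : Real.sin r * Real.cosh (π * (n + 1/2) + (-1 : ℝ) ^ (n + 1) * r) = 1) :
    r ≤ π * Real.exp (-π * n) :=
  root_correction_bound_general n r hr heq
end

section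
/- For all real R ≥ 0, the Riesz mean Σ_{n≥1} (R⁴ − n⁴)_+ satisfies (4/5)R⁵ − (1/2)R⁴ − (1/3)R³ ≤ Σ_{n≥1} (R⁴ − n⁴)_+ ≤ (4/5)R⁵ − (1/2)R⁴ + (1/6)R³ + (1/12)R². -/
lemma riesz_sum_pow4 (N : ℕ) :
    ∑ n ∈ Finset.range N, ((n : ℝ) + 1)^4
      = (6*(N:ℝ)^5 + 15*(N:ℝ)^4 + 10*(N:ℝ)^3 - (N:ℝ)) / 30 := by
  induction N with
  | zero => simp
  | succ n ih =>
    rw [Finset.sum_range_succ, ih]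
    push_cast
    ring
lemma riesz_lower_aux (n R : ℝ) (hn0 : 0 ≤ n) (hl : n ≤ R) (hu : R ≤ n + 1) :
    4 / 5 * R ^ 5 - 1 / 2 * R ^ 4 - 1 / 3 * R ^ 3 ≤
      n * R ^ 4 - (6 * n ^ 5 + 15 * n ^ 4 + 10 * n ^ 3 - n) / 30 := by
  obtain ⟨t, rfl⟩ : ∃ t, R = n + t := ⟨R - n, by ring⟩
  have ht : 0 ≤ t := by linarith
  have hs : 0 ≤ 1 - t := by linarith
  have h7 : 0 ≤ t ^ 3 * (1 / 3 + t / 2 - 4 / 5 * t ^ 2) := by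
    apply mul_nonneg (pow_nonneg ht 3)
    nlinarith [mul_nonneg ht hs, sq_nonneg t, sq_nonneg (1-t)]
  linarith [mul_nonneg (mul_nonneg (pow_nonneg hn0 3) ht) hs,
    mul_nonneg (mul_nonneg (sq_nonneg n) ht) hs,
    mul_nonneg (mul_nonneg (sq_nonneg n) (mul_nonneg ht ht)) hs,
    mul_nonneg (mul_nonneg hn0 (mul_nonneg ht ht)) hs,
    mul_nonneg (mul_nonneg hn0 (mul_nonneg (mul_nonneg ht ht) ht)) hs, h7, hn0]

lemma riesz_q2 (t : ℝ) (ht : 0 ≤ t) (ht1 : t ≤ 1) :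
    0 ≤ 1/12 + t/2 - 3*t^2 + 4*t^3 := by
  have hu : (0:ℝ) ≤ 1 - t := by linarith
  nlinarith [pow_nonneg hu 10, mul_nonneg ht (pow_nonneg hu 9),
    mul_nonneg (pow_nonneg ht 2) (pow_nonneg hu 8),
    mul_nonneg (pow_nonneg ht 3) (pow_nonneg hu 7),
    mul_nonneg (pow_nonneg ht 4) (pow_nonneg hu 6),
    mul_nonneg (pow_nonneg ht 6) (pow_nonneg hu 4),
    mul_nonneg (pow_nonneg ht 7) (pow_nonneg hu 3),
    mul_nonneg (pow_nonneg ht 8) (pow_nonneg hu 2),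
    mul_nonneg (pow_nonneg ht 9) hu, pow_nonneg ht 10]

lemma riesz_q12 (t : ℝ) (ht : 0 ≤ t) (ht1 : t ≤ 1) :
    0 ≤ 1/20 + 2/3*t - 5/2*t^2 + 2*t^3 + 3*t^4 := by
  have hu : (0:ℝ) ≤ 1 - t := by linarith
  nlinarith [pow_nonneg hu 7, mul_nonneg ht (pow_nonneg hu 6),
    mul_nonneg (pow_nonneg ht 2) (pow_nonneg hu 5),
    mul_nonneg (pow_nonneg ht 3) (pow_nonneg hu 4),
    mul_nonneg (pow_nonneg ht 4) (pow_nonneg hu 3),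
    mul_nonneg (pow_nonneg ht 5) (pow_nonneg hu 2),
    mul_nonneg (pow_nonneg ht 6) hu, pow_nonneg ht 7]

lemma riesz_q0 (t : ℝ) (ht : 0 ≤ t) (ht1 : t ≤ 1) :
    0 ≤ 1/12 + t/6 - t^2/2 + 4/5*t^3 := by
  have hu : (0:ℝ) ≤ 1 - t := by linarith
  nlinarith [pow_nonneg hu 3, mul_nonneg ht (pow_nonneg hu 2),
    mul_nonneg (pow_nonneg ht 2) hu, pow_nonneg ht 3]

lemma riesz_upper_aux (n R : ℝ) (hn1 : 1 ≤ n) (hl : n ≤ R) (hu : R ≤ n + 1) :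
    n * R ^ 4 - (6 * n ^ 5 + 15 * n ^ 4 + 10 * n ^ 3 - n) / 30 ≤
      4 / 5 * R ^ 5 - 1 / 2 * R ^ 4 + 1 / 6 * R ^ 3 + 1 / 12 * R ^ 2 := by
  have hn0 : (0:ℝ) ≤ n := by linarith
  obtain ⟨t, rfl⟩ : ∃ t, R = n + t := ⟨R - n, by ring⟩
  have ht : 0 ≤ t := by linarith
  have ht1 : t ≤ 1 := by linarith
  linarith [mul_nonneg (pow_nonneg hn0 3) (sq_nonneg (1 - 2*t)),
    mul_nonneg (mul_nonneg hn0 (by linarith : (0:ℝ) ≤ n - 1)) (riesz_q2 t ht ht1),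
    mul_nonneg hn0 (riesz_q12 t ht ht1),
    mul_nonneg (sq_nonneg t) (riesz_q0 t ht ht1)]

/-- Two-sided bounds for the one-dimensional Riesz mean `Σ_{n≥1} (R⁴ − n⁴)₊`. -/
theorem riesz_mean_integer_bounds (R : ℝ) (hR : 0 ≤ R) :
    (4/5) * R^5 - (1/2) * R^4 - (1/3) * R^3 ≤
        (∑' n : ℕ, max (R^4 - ((n : ℝ) + 1)^4) 0) ∧
      (∑' n : ℕ, max (R^4 - ((n : ℝ) + 1)^4) 0) ≤
        (4/5) * R^5 - (1/2) * R^4 + (1/6) * R^3 + (1/12) * R^2 := by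
  set N : ℕ := ⌊R⌋₊ with hNdef
  have hfl : (N : ℝ) ≤ R := Nat.floor_le hR
  have hfl' : R < (N : ℝ) + 1 := Nat.lt_floor_add_one R
  have key : (∑' n : ℕ, max (R^4 - ((n : ℝ) + 1)^4) 0)
      = ∑ n ∈ Finset.range N, (R^4 - ((n : ℝ) + 1)^4) := by
    rw [tsum_eq_sum (s := Finset.range N) ?h0]
    · refine Finset.sum_congr rfl fun n hn => ?_
      rw [Finset.mem_range] at hn
      have h1 : ((n : ℝ) + 1) ≤ R := by
        have : ((n : ℝ) + 1) ≤ (N : ℝ) := by exact_mod_cast Nat.succ_le_of_lt hn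
        linarith
      have h2 : ((n : ℝ) + 1)^4 ≤ R^4 := by
        apply pow_le_pow_left₀ (by positivity) h1
      exact max_eq_left (by linarith)
    · intro n hn
      rw [Finset.mem_range, not_lt] at hn
      have h1 : R ≤ ((n : ℝ) + 1) := by
        have : (N : ℝ) ≤ (n : ℝ) := by exact_mod_cast hn
        linarith
      have h2 : R^4 ≤ ((n : ℝ) + 1)^4 := pow_le_pow_left₀ hR h1 4
      exact max_eq_right (by linarith)
  rw [key, Finset.sum_sub_distrib, Finset.sum_const, Finset.card_range, riesz_sum_pow4,
    nsmul_eq_mul]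
  have hn0 : (0:ℝ) ≤ (N:ℝ) := Nat.cast_nonneg N
  constructor
  · have := riesz_lower_aux (N:ℝ) R hn0 hfl (le_of_lt hfl')
    linarith
  · rcases Nat.eq_zero_or_pos N with h0 | h1
    · have hR1 : R ≤ 1 := by rw [h0] at hfl'; push_cast at hfl'; linarith
      have hA := mul_nonneg (sq_nonneg R) (riesz_q0 R hR hR1)
      rw [h0]
      push_cast
      nlinarith [hA]
    · have hn1 : (1:ℝ) ≤ (N:ℝ) := by exact_mod_cast h1
      have := riesz_upper_aux (N:ℝ) R hn1 hfl (le_of_lt hfl')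
      linarith
end

section
/- For all real R ≥ 0, the Riesz mean Σ_{n≥1} (R⁴ − (n + 1/2)⁴)_+ satisfies (4/5)R⁵ − R⁴ − (11/6)R³ − (3/2)R² − (127/240)R ≤ Σ_{n≥1} (R⁴ − (n+1/2)⁴)_+ ≤ (4/5)R⁵ − R⁴ + (1/6)R³ + (3/2)R² + (1/30)R + 1/8. -/
/-!
Only the terms with `n + 3/2 ≤ R` contribute, so with `N = ⌊R - 1/2⌋₊` the sum is
`N R⁴ - Σ_{n<N} (n + 3/2)⁴`, a polynomial in `N` and `R`. Writing `R = N + 1/2 + t` with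
`0 ≤ t ≤ 1`, the gap to either bound is a cubic in `N` whose coefficients are polynomials in `t`
that are nonnegative on `[0, 1]`. When `N = 0` the sum is empty and `R < 3/2`.
-/

open Finset

namespace RieszMean

noncomputable def lowerBound (R : ℝ) : ℝ :=
  (4/5) * R^5 - R^4 - (11/6) * R^3 - (3/2) * R^2 - (127/240) * R

noncomputable def upperBound (R : ℝ) : ℝ :=
  (4/5) * R^5 - R^4 + (1/6) * R^3 + (3/2) * R^2 + (1/30) * R + 1/8

theorem sum_range_add_three_halves_pow_four (N : ℕ) :
    ∑ n ∈ range N, ((n : ℝ) + 1 + 1/2)^4 =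
      (N : ℝ)^5/5 + (N : ℝ)^4 + (11/6) * (N : ℝ)^3 + (3/2) * (N : ℝ)^2
        + (127/240) * (N : ℝ) := by
  induction N with
  | zero => simp
  | succ k ih =>
    rw [sum_range_succ, ih]
    push_cast
    ring

theorem lt_floor_iff_add_three_halves_le {R : ℝ} {n : ℕ} :
    n < ⌊R - 1/2⌋₊ ↔ (n : ℝ) + 1 + 1/2 ≤ R := by
  rw [← Nat.add_one_le_iff, Nat.le_floor_iff' n.succ_ne_zero]
  constructor <;> intro h <;> push_cast at * <;> linarith

theorem tsum_max_sub_pow_four_eq_sum_range {R : ℝ} (hR : 0 ≤ R) :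
    ∑' n : ℕ, max (R^4 - ((n : ℝ) + 1 + 1/2)^4) 0 =
      ∑ n ∈ range ⌊R - 1/2⌋₊, (R^4 - ((n : ℝ) + 1 + 1/2)^4) := by
  rw [tsum_eq_sum (s := range ⌊R - 1/2⌋₊)]
  · refine sum_congr rfl fun n hn => max_eq_left ?_
    have := lt_floor_iff_add_three_halves_le.1 (mem_range.1 hn)
    exact sub_nonneg.2 (pow_le_pow_left₀ (by positivity) this 4)
  · intro n hn
    have := lt_floor_iff_add_three_halves_le.not.1 (mem_range.not.1 hn)
    exact max_eq_right (sub_nonpos.2 (pow_le_pow_left₀ hR (not_le.1 this).le 4))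

theorem lowerBound_nonpos {R : ℝ} (hR : 0 ≤ R) (hR' : R ≤ 3/2) : lowerBound R ≤ 0 := by
  unfold lowerBound
  have h : 0 ≤ 3/2 - R := sub_nonneg.2 hR'
  nlinarith [pow_nonneg hR 2, pow_nonneg hR 3, mul_nonneg (pow_nonneg hR 3) h,
    mul_nonneg (pow_nonneg hR 3) (mul_nonneg h h)]

theorem upperBound_nonneg {R : ℝ} (hR : 0 ≤ R) : 0 ≤ upperBound R := by
  unfold upperBound
  nlinarith [pow_nonneg hR 3, mul_nonneg (pow_nonneg hR 2) (sq_nonneg (R - 5/6))]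

theorem lowerBound_le {x R : ℝ} (hx : 0 ≤ x) (hxR : x + 1/2 ≤ R) (hRx : R ≤ x + 1 + 1/2) :
    lowerBound R ≤
      x * R^4 - (x^5/5 + x^4 + (11/6) * x^3 + (3/2) * x^2 + (127/240) * x) := by
  obtain ⟨t, rfl⟩ : ∃ t, R = x + 1/2 + t := ⟨R - x - 1/2, by ring⟩
  have ht : 0 ≤ t := by linarith
  have ht' : 0 ≤ 1 - t := by linarith
  have ht'' : 0 ≤ 1 + t := by linarith
  have c0 : 0 ≤ 29/32 + (877/240)*t + (19/4)*t^2 + (11/6)*t^3 - t^4 - (4/5)*t^5 := by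
    nlinarith [mul_nonneg (mul_nonneg (pow_nonneg ht 3) ht') ht'', pow_nonneg ht 2, pow_nonneg ht 3]
  have c1 : 0 ≤ 51/16 + 10*t + 7*t^2 - 2*t^3 - 3*t^4 := by
    nlinarith [mul_nonneg (mul_nonneg (pow_nonneg ht 2) ht') ht'', pow_nonneg ht 2]
  have c2 : 0 ≤ 15/4 + (17/2)*t - 4*t^3 := by
    nlinarith [mul_nonneg (mul_nonneg ht ht') ht'']
  have c3 : 0 ≤ 3/2 + 2*t - 2*t^2 := by nlinarith [mul_nonneg ht ht']
  have key : x * (x + 1/2 + t)^4 - (x^5/5 + x^4 + (11/6) * x^3 + (3/2) * x^2 + (127/240) * x)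
      - lowerBound (x + 1/2 + t) =
      (29/32 + (877/240)*t + (19/4)*t^2 + (11/6)*t^3 - t^4 - (4/5)*t^5)
      + (51/16 + 10*t + 7*t^2 - 2*t^3 - 3*t^4) * x + (15/4 + (17/2)*t - 4*t^3) * x^2
      + (3/2 + 2*t - 2*t^2) * x^3 := by
    unfold lowerBound; ring
  linarith [mul_nonneg c1 hx, mul_nonneg c2 (pow_nonneg hx 2), mul_nonneg c3 (pow_nonneg hx 3)]

theorem le_upperBound {x R : ℝ} (hx : 0 ≤ x) (hxR : x + 1/2 ≤ R) (hRx : R ≤ x + 1 + 1/2) :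
    x * R^4 - (x^5/5 + x^4 + (11/6) * x^3 + (3/2) * x^2 + (127/240) * x) ≤ upperBound R := by
  obtain ⟨t, rfl⟩ : ∃ t, R = x + 1/2 + t := ⟨R - x - 1/2, by ring⟩
  have ht : 0 ≤ t := by linarith
  have ht' : 0 ≤ 1 - t := by linarith
  have d0 : 0 ≤ 1/2 + (169/120)*t + (5/4)*t^2 + (1/6)*t^3 + t^4 + (4/5)*t^5 := by positivity
  have d1 : 0 ≤ 15/8 + 2*t - t^2 + 2*t^3 + 3*t^4 := by
    nlinarith [mul_nonneg ht ht', pow_nonneg ht 3, pow_nonneg ht 4]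
  have d2 : 0 ≤ 9/4 - (5/2)*t + 4*t^3 := by
    nlinarith [mul_nonneg ht (sq_nonneg (t - 1/2)), sq_nonneg (t - 7/16)]
  have d3 : 0 ≤ 1/2 - 2*t + 2*t^2 := by nlinarith [sq_nonneg (2*t - 1)]
  have key : upperBound (x + 1/2 + t) -
      (x * (x + 1/2 + t)^4 - (x^5/5 + x^4 + (11/6) * x^3 + (3/2) * x^2 + (127/240) * x)) =
      (1/2 + (169/120)*t + (5/4)*t^2 + (1/6)*t^3 + t^4 + (4/5)*t^5)
      + (15/8 + 2*t - t^2 + 2*t^3 + 3*t^4) * x + (9/4 - (5/2)*t + 4*t^3) * x^2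
      + (1/2 - 2*t + 2*t^2) * x^3 := by
    unfold upperBound; ring
  linarith [mul_nonneg d1 hx, mul_nonneg d2 (pow_nonneg hx 2), mul_nonneg d3 (pow_nonneg hx 3)]

end RieszMean

open RieszMean

/-- Two-sided bounds for the one-dimensional Riesz mean `Σ_{n≥1} (R⁴ − (n + 1/2)⁴)₊`. -/
theorem riesz_mean_half_integer_bounds (R : ℝ) (hR : 0 ≤ R) :
    (4/5) * R^5 - R^4 - (11/6) * R^3 - (3/2) * R^2 - (127/240) * R ≤
        (∑' n : ℕ, max (R^4 - ((n : ℝ) + 1 + 1/2)^4) 0) ∧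
      (∑' n : ℕ, max (R^4 - ((n : ℝ) + 1 + 1/2)^4) 0) ≤
        (4/5) * R^5 - R^4 + (1/6) * R^3 + (3/2) * R^2 + (1/30) * R + 1/8 := by
  change lowerBound R ≤ _ ∧ _ ≤ upperBound R
  rw [tsum_max_sub_pow_four_eq_sum_range hR, sum_sub_distrib, sum_const, card_range,
    nsmul_eq_mul, sum_range_add_three_halves_pow_four]
  obtain ⟨N, hN⟩ : ∃ N, ⌊R - 1/2⌋₊ = N := ⟨_, rfl⟩
  have hRN : R ≤ N + 1 + 1/2 := by linarith [hN ▸ Nat.lt_floor_add_one (R - 1/2)]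
  rw [hN]
  rcases N.eq_zero_or_pos with rfl | hN0
  · simpa using ⟨lowerBound_nonpos hR (by norm_num at hRN ⊢; linarith), upperBound_nonneg hR⟩
  · have hNR : (N : ℝ) + 1/2 ≤ R := by
      have h1 : 1 ≤ R - 1/2 := Nat.floor_pos.1 (hN ▸ hN0)
      linarith [hN ▸ Nat.floor_le (a := R - 1/2) (by linarith)]
    exact ⟨lowerBound_le N.cast_nonneg hNR hRN, le_upperBound N.cast_nonneg hNR hRN⟩
end

section
/- Let η > s² > 0 with s = |ξ'|², and set ζ₁⁺ = √(√η − s), ζ₂⁺ = i√(√η + s) and ζ₁⁻ = −ζ₁⁺. Then −(ζ₁⁻ − ζ₂⁺)/(ζ₁⁺ − ζ₂⁺) = −s/√η + i√(η − s²)/√η. -/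
open Complex

/-- Computation of the ratio of scattering coefficients for the auxiliary Dirichlet problem:
with `ζ₁⁺ = √(√η − s)`, `ζ₁⁻ = −ζ₁⁺`, `ζ₂⁺ = i√(√η + s)` and `η > s² > 0`,
`−(ζ₁⁻ − ζ₂⁺)/(ζ₁⁺ − ζ₂⁺) = −s/√η + i√(η − s²)/√η`. -/
theorem dirichlet_reflection (s η : ℝ) (hs : 0 < s) (hη : s ^ 2 < η) :
    -((-(Real.sqrt (Real.sqrt η - s) : ℂ)) - Complex.I * (Real.sqrt (Real.sqrt η + s) : ℂ)) /
        ((Real.sqrt (Real.sqrt η - s) : ℂ) - Complex.I * (Real.sqrt (Real.sqrt η + s) : ℂ)) =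
      -(s / Real.sqrt η : ℝ) + Complex.I * (Real.sqrt (η - s ^ 2) / Real.sqrt η : ℝ) := by
  have hη0 : (0:ℝ) < η := lt_trans (by positivity) hη
  have hE0 : 0 < Real.sqrt η := Real.sqrt_pos.2 hη0
  have hsE : s < Real.sqrt η := by
    have := Real.lt_sqrt (le_of_lt hs) (y := η)
    exact this.2 hη
  set A := Real.sqrt (Real.sqrt η - s) with hA
  set B := Real.sqrt (Real.sqrt η + s) with hB
  set E := Real.sqrt η with hE
  set F := Real.sqrt (η - s ^ 2) with hF
  have hA2 : A ^ 2 = E - s := Real.sq_sqrt (by linarith)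
  have hB2 : B ^ 2 = E + s := Real.sq_sqrt (by positivity)
  have hE2 : E ^ 2 = η := Real.sq_sqrt (le_of_lt hη0)
  have hAB : A * B = F := by
    rw [hA, hB, ← Real.sqrt_mul (by linarith)]
    congr 1
    nlinarith [Real.sq_sqrt (le_of_lt hη0)]
  have hB0 : 0 < B := Real.sqrt_pos.2 (by positivity)
  have hden : ((A : ℂ) - Complex.I * (B : ℂ)) ≠ 0 := by
    intro h
    have him : ((A : ℂ) - Complex.I * (B : ℂ)).im = 0 := by rw [h]; simp
    simp [Complex.sub_im, Complex.mul_im] at him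
    exact (ne_of_gt hB0) him
  rw [div_eq_iff hden]
  have hE0' : E ≠ 0 := ne_of_gt hE0
  apply Complex.ext
  · simp only [Complex.add_re, Complex.add_im, Complex.mul_re, Complex.mul_im, Complex.sub_re,
      Complex.sub_im, Complex.neg_re, Complex.neg_im, Complex.ofReal_re, Complex.ofReal_im,
      Complex.I_re, Complex.I_im]
    field_simp
    linear_combination B * hAB - A * hB2
  · simp only [Complex.add_re, Complex.add_im, Complex.mul_re, Complex.mul_im, Complex.sub_re,
      Complex.sub_im, Complex.neg_re, Complex.neg_im, Complex.ofReal_re, Complex.ofReal_im,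
      Complex.I_re, Complex.I_im]
    field_simp
    linear_combination A * hAB - B * hA2
end

section
/- For all reals k, l with 0 < l ≤ k and d ≥ 1, the inequality (k/l)·(1 − (1 − l/k)^{1 + 4/d}) ≥ (d+4)/d − 4(d+1)l/(d²k) + 4l²/(d²k²) holds. -/
/-! Write `x = l/k ∈ (0, 1]` and `p = 2/d ∈ (0, 1]`, so that `1 + 4/d = 1 + 2p`. Bernoulli's
inequality `(1 - x)^p ≤ 1 - p x` gives `(1 - x)^(1+2p) ≤ (1 - x)(1 - p x)^2`, and
`1 - (1 - x)(1 - p x)^2 = x ((1 + 2p) - (p^2 + 2p) x + p^2 x^2)` is exactly `x` times the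
claimed lower bound. -/

open Real

namespace BernoulliLowerBound

variable {x p : ℝ}

lemma one_sub_rpow_le_one_sub_mul (hx : x ≤ 1) (hp₀ : 0 ≤ p) (hp₁ : p ≤ 1) :
    (1 - x) ^ p ≤ 1 - p * x := by
  simpa [sub_eq_add_neg, mul_comm] using
    rpow_one_add_le_one_add_mul_self (s := -x) (by linarith) hp₀ hp₁

lemma one_sub_rpow_one_add_two_mul_le (hx : x ≤ 1) (hp₀ : 0 ≤ p) (hp₁ : p ≤ 1) :
    (1 - x) ^ (1 + 2 * p) ≤ (1 - x) * (1 - p * x) ^ 2 := by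
  have h1x : 0 ≤ 1 - x := by linarith
  have hsplit : (1 - x) ^ (1 + 2 * p) = (1 - x) * ((1 - x) ^ p) ^ 2 := by
    rw [rpow_add' h1x (by positivity), rpow_one, mul_comm 2 p, rpow_mul h1x, rpow_two]
  rw [hsplit]
  gcongr
  exact one_sub_rpow_le_one_sub_mul hx hp₀ hp₁

lemma mul_quadratic_le_one_sub_one_sub_rpow (hx : x ≤ 1) (hp₀ : 0 ≤ p) (hp₁ : p ≤ 1) :
    x * ((1 + 2 * p) - (p ^ 2 + 2 * p) * x + p ^ 2 * x ^ 2) ≤ 1 - (1 - x) ^ (1 + 2 * p) := by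
  have hexpand : x * ((1 + 2 * p) - (p ^ 2 + 2 * p) * x + p ^ 2 * x ^ 2)
      = 1 - (1 - x) * (1 - p * x) ^ 2 := by ring
  linarith [one_sub_rpow_one_add_two_mul_le hx hp₀ hp₁]

end BernoulliLowerBound

open BernoulliLowerBound in
/-- Bernoulli-type lower bound: for `0 < l ≤ k` and `d ≥ 2`,
`(k/l)(1 − (1 − l/k)^{1+4/d}) ≥ (d+4)/d − 4(d+1)l/(d²k) + 4l²/(d²k²)`. -/
theorem bernoulli_lower_bound (d : ℕ) (hd : 2 ≤ d) (k l : ℝ) (hl : 0 < l) (hlk : l ≤ k) :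
    (d + 4) / d - 4 * (d + 1) * l / (d^2 * k) + 4 * l^2 / (d^2 * k^2) ≤
      (k / l) * (1 - (1 - l / k) ^ ((1 : ℝ) + 4 / d)) := by
  have hk : 0 < k := hl.trans_le hlk
  have hd₀ : (0 : ℝ) < d := by positivity
  have hp₁ : (2 : ℝ) / d ≤ 1 := by
    rw [div_le_one hd₀]
    exact_mod_cast hd
  have key := mul_quadratic_le_one_sub_one_sub_rpow ((div_le_one hk).mpr hlk)
    (by positivity : (0 : ℝ) ≤ 2 / d) hp₁
  rw [show (1 : ℝ) + 4 / d = 1 + 2 * (2 / d) by ring]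
  calc (d + 4) / d - 4 * (d + 1) * l / (d^2 * k) + 4 * l^2 / (d^2 * k^2)
      = (k / l) * (l / k * ((1 + 2 * (2 / d)) - ((2 / d) ^ 2 + 2 * (2 / d)) * (l / k)
          + (2 / d) ^ 2 * (l / k) ^ 2)) := by
        field_simp
        ring
    _ ≤ _ := by gcongr
end
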